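/- arXiv:1703.03708 — 3 statements merged into one kernel-verified Lean document; each statement's English description precedes it below -/
import Mathlib

section
/- Let m ≥ 4 and let x be an indecomposable solution of the standard congruence 1·x₁ + ⋯ + (m−1)·x_{m−1} ≡ 0 (mod m). Then the width satisfies σ(x) ≤ m/2 and the total size satisfies ‖x‖₁ + σ(x) ≤ m + 1. -/
/-!
The congruence `(C_m)` has the weights `1, …, m - 1` in `ZMod m`; the argument works for any
injective nonzero weights `w` in a finite cyclic group `G`.

Width: if two support coordinates satisfy `wᵢ + wⱼ = 0`, minimality gives `x = eᵢ + eⱼ`.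
Otherwise the support weights `A` and their negatives `-A` are nonzero and `A ∩ -A` consists
of elements of order two, of which a cyclic group has at most one; so `2σ(x) - 1 ≤ |G| - 1`.

Size: if all `xᵢ ≤ 1` then `‖x‖₁ = σ(x)`. Otherwise lowering some `xᵢ ≥ 2` by one gives a
zero-sum free `z`, whose set of subsums `Σ(z)` has at least `‖z‖₁ + σ(z)` elements, by
induction on `‖z‖₁`: lowering a multiplicity `≥ 2` removes the full sum `s` from `Σ(z)`, and
in any case `Σ(z)` contains `0`, `s`, the support weights `wᵢ` and the `s - wⱼ`, where
`wᵢ = s - wⱼ` only if `2wᵢ = s` (for at most two `i`) or the support is `{i, j}`.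
-/

open Finset Function

section PiNat

variable {ι : Type*} [DecidableEq ι] {z : ι → ℕ} {i j : ι}

lemma single_le_of_ne_zero (h : z i ≠ 0) : Pi.single i 1 ≤ z := by
  intro k
  rcases eq_or_ne k i with rfl | hk
  · simpa [Nat.one_le_iff_ne_zero] using h
  · simp [Pi.single_eq_of_ne hk]

lemma single_add_single_le (hij : i ≠ j) (hi : z i ≠ 0) (hj : z j ≠ 0) :
    Pi.single i 1 + Pi.single j 1 ≤ z := by
  intro k
  rcases eq_or_ne k i with rfl | hki
  · simpa [Pi.single_eq_of_ne hij, Nat.one_le_iff_ne_zero] using hi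
  rcases eq_or_ne k j with rfl | hkj
  · simpa [Pi.single_eq_of_ne hki, Nat.one_le_iff_ne_zero] using hj
  · simp [Pi.single_eq_of_ne hki, Pi.single_eq_of_ne hkj]

lemma tsub_single_lt (h : z i ≠ 0) : z - Pi.single i 1 < z := by
  refine lt_of_le_of_ne tsub_le_self fun heq => ?_
  have := congrFun heq i
  simp only [Pi.sub_apply, Pi.single_eq_same] at this
  omega

variable [Fintype ι]

lemma card_support_single : #{k | (Pi.single i 1 : ι → ℕ) k ≠ 0} = 1 := by
  rw [card_eq_one]
  exact ⟨i, by ext k; simp [Pi.single_apply]⟩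

lemma card_support_single_add_single (hij : i ≠ j) :
    #{k | (Pi.single i 1 + Pi.single j 1 : ι → ℕ) k ≠ 0} = 2 := by
  rw [card_eq_two]
  refine ⟨i, j, hij, ?_⟩
  ext k
  rcases eq_or_ne k i with rfl | hki <;> simp [Pi.single_apply, *]

lemma sum_tsub_single (h : z i ≠ 0) : ∑ k, (z - Pi.single i 1 : ι → ℕ) k = ∑ k, z k - 1 := by
  rw [Pi.sub_def, sum_tsub_distrib _ fun k _ => single_le_of_ne_zero h k, sum_pi_single']
  simp

lemma card_support_tsub_single (h : 2 ≤ z i) :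
    #{k | (z - Pi.single i 1 : ι → ℕ) k ≠ 0} = #{k | z k ≠ 0} := by
  congr 1
  ext k
  rcases eq_or_ne k i with rfl | hk
  · simp only [Pi.sub_apply, ne_eq, mem_filter, mem_univ, Pi.single_eq_same, true_and]
    omega
  · simp [Pi.single_eq_of_ne hk]

omit [DecidableEq ι] in
lemma sum_eq_card_support_of_le_one (h : ∀ k, z k ≤ 1) : ∑ k, z k = #{k | z k ≠ 0} := by
  rw [card_filter]
  refine sum_congr rfl fun k _ => ?_
  have := h k
  split_ifs <;> omega

end PiNat

section Subsums

variable {ι G : Type*} [Fintype ι] [AddCommGroup G] (w : ι → G)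
  {y z z' : ι → ℕ}

def ZeroSumFree (z : ι → ℕ) : Prop :=
  ∀ y ≤ z, Fintype.linearCombination ℕ w y = 0 → y = 0

lemma linearCombination_tsub (h : y ≤ z) :
    Fintype.linearCombination ℕ w (z - y) =
      Fintype.linearCombination ℕ w z - Fintype.linearCombination ℕ w y := by
  rw [eq_sub_iff_add_eq, ← map_add, tsub_add_cancel_of_le h]

variable {w}

lemma ZeroSumFree.mono (hz : ZeroSumFree w z) (h : z' ≤ z) : ZeroSumFree w z' :=
  fun y hy => hz y (hy.trans h)

lemma ZeroSumFree.eq_of_le (hz : ZeroSumFree w z) (hy : y ≤ z)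
    (h : Fintype.linearCombination ℕ w y = Fintype.linearCombination ℕ w z) : y = z := by
  have := hz (z - y) tsub_le_self (by rw [linearCombination_tsub w hy, h, sub_self])
  exact hy.antisymm (tsub_eq_zero_iff_le.mp this)

variable [DecidableEq ι] [DecidableEq G]

variable (w) in
def subsums (z : ι → ℕ) : Finset G :=
  (Iic z).image (Fintype.linearCombination ℕ w)

lemma linearCombination_mem_subsums (h : y ≤ z) :
    Fintype.linearCombination ℕ w y ∈ subsums w z :=
  mem_image_of_mem _ (mem_Iic.mpr h)

lemma subsums_mono (h : z' ≤ z) : subsums w z' ⊆ subsums w z :=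
  image_subset_image (Iic_subset_Iic.mpr h)

lemma card_subsums_lt (hz : ZeroSumFree w z) (h : z' < z) :
    #(subsums w z') < #(subsums w z) := by
  refine card_lt_card ⟨subsums_mono h.le, fun hsub => ?_⟩
  obtain ⟨y, hy, hyz⟩ := mem_image.mp (hsub (linearCombination_mem_subsums le_rfl))
  have hyz' : y ≤ z' := mem_Iic.mp hy
  obtain rfl := hz.eq_of_le (hyz'.trans h.le) hyz
  exact h.not_ge hyz'

end Subsums

section Cyclic

variable {ι G : Type*} [Fintype ι] [DecidableEq ι] [AddCommGroup G] [Fintype G] [DecidableEq G]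
  [IsAddCyclic G] {w : ι → G}

lemma card_two_nsmul_eq_le (s : G) : #{g : G | 2 • g = s} ≤ 2 := by
  rcases ({g : G | 2 • g = s} : Finset G).eq_empty_or_nonempty with h | ⟨g₀, hg₀⟩
  · simp [h]
  rw [mem_filter] at hg₀
  calc #{g : G | 2 • g = s}
      ≤ #{g : G | 2 • g = 0} := by
        refine card_le_card_of_injOn (· - g₀) (fun g hg => ?_) sub_left_injective.injOn
        simp only [coe_filter, mem_univ, true_and, Set.mem_ofPred_eq] at hg ⊢
        rw [smul_sub, hg, hg₀.2, sub_self]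
    _ ≤ 2 := IsAddCyclic.card_nsmul_eq_zero_le two_pos

lemma ZeroSumFree.card_weights_inter_le {z : ι → ℕ} (hz : ZeroSumFree w z)
    (hT : 2 ≤ #{i | z i ≠ 0}) :
    #(({i | z i ≠ 0} : Finset ι).image w ∩
      ({i | z i ≠ 0} : Finset ι).image (Fintype.linearCombination ℕ w z - w ·)) ≤ 2 := by
  rcases hT.eq_or_lt with hT2 | hT3
  · exact (card_le_card inter_subset_left).trans (card_image_le.trans hT2.ge)
  refine (card_le_card fun u hu => ?_).trans
    (card_two_nsmul_eq_le (Fintype.linearCombination ℕ w z))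
  obtain ⟨⟨i, hi, rfl⟩, ⟨j, hj, hji⟩⟩ := And.imp mem_image.mp mem_image.mp (mem_inter.mp hu)
  rw [mem_filter] at hi hj
  rw [sub_eq_iff_eq_add'] at hji
  rcases eq_or_ne i j with rfl | hij
  · simp [two_nsmul, hji]
  have hzij := hz.eq_of_le (single_add_single_le hij hi.2 hj.2) (by simp [hji, add_comm])
  rw [← hzij, card_support_single_add_single hij] at hT3
  exact absurd hT3 (lt_irrefl 2)

theorem ZeroSumFree.two_mul_card_support_le_card_subsums {z : ι → ℕ} (hw : Injective w)
    (hw0 : ∀ i, w i ≠ 0) (hz : ZeroSumFree w z) :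
    2 * #{i | z i ≠ 0} ≤ #(subsums w z) := by
  set S := Fintype.linearCombination ℕ w z
  set V := ({i | z i ≠ 0} : Finset ι).image w
  set W := ({i | z i ≠ 0} : Finset ι).image (S - w ·)
  have hV : #V = #{i | z i ≠ 0} := card_image_of_injective _ hw
  have hW : #W = #{i | z i ≠ 0} :=
    card_image_of_injective _ fun i j h => hw (sub_right_injective h)
  have h0 : (0 : G) ∈ subsums w z := by
    simpa using linearCombination_mem_subsums (w := w) (show 0 ≤ z from zero_le)
  have hVsub : V ⊆ subsums w z := image_subset_iff.mpr fun i hi => by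
    simpa using linearCombination_mem_subsums (w := w) (single_le_of_ne_zero (mem_filter.mp hi).2)
  have hWsub : W ⊆ subsums w z := image_subset_iff.mpr fun i hi => by
    simpa [linearCombination_tsub w (single_le_of_ne_zero (mem_filter.mp hi).2)] using
      linearCombination_mem_subsums (w := w) (tsub_le_self : z - Pi.single i 1 ≤ z)
  have h0V : (0 : G) ∉ V := by simpa [V] using fun i _ => hw0 i
  rcases lt_or_ge #{i | z i ≠ 0} 2 with hT | hT
  · have := card_le_card (insert_subset h0 hVsub)
    rw [card_insert_of_notMem h0V] at this
    omega
  have hSV : S ∉ V := by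
    simp only [V, mem_image, mem_filter, mem_univ, true_and, not_exists, not_and]
    intro i hi hiS
    have hzi := hz.eq_of_le (single_le_of_ne_zero hi) (by simpa using hiS)
    rw [← hzi, card_support_single] at hT
    omega
  have hS0 : S ≠ 0 := fun h => by
    obtain ⟨i, hi⟩ : ({i | z i ≠ 0} : Finset ι).Nonempty := card_pos.mp (by omega)
    exact (mem_filter.mp hi).2 (congrFun (hz z le_rfl h) i)
  have h0W : (0 : G) ∉ W := by
    simp only [W, mem_image, not_exists, not_and]
    exact fun i hi h => hSV (mem_image.mpr ⟨i, hi, (sub_eq_zero.mp h).symm⟩)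
  have hSW : S ∉ W := by simpa [W] using fun i _ => hw0 i
  have hsub : insert 0 (insert S (V ∪ W)) ⊆ subsums w z :=
    insert_subset h0 (insert_subset (linearCombination_mem_subsums le_rfl)
      (union_subset hVsub hWsub))
  have hcard := card_le_card hsub
  rw [card_insert_of_notMem (by simp [h0V, h0W, hS0.symm]),
    card_insert_of_notMem (by simp [hSV, hSW])] at hcard
  have := card_union_add_card_inter V W
  have : #(V ∩ W) ≤ 2 := hz.card_weights_inter_le hT
  omega

theorem ZeroSumFree.sum_add_card_support_le_card_subsums {z : ι → ℕ} (hw : Injective w)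
    (hw0 : ∀ i, w i ≠ 0) (hz : ZeroSumFree w z) :
    ∑ i, z i + #{i | z i ≠ 0} ≤ #(subsums w z) := by
  by_cases h1 : ∀ i, z i ≤ 1
  · rw [sum_eq_card_support_of_le_one h1, ← two_mul]
    exact hz.two_mul_card_support_le_card_subsums hw hw0
  push Not at h1
  obtain ⟨i, hi⟩ := h1
  have hlt := tsub_single_lt (i := i) (z := z) (by omega)
  have ih := (hz.mono hlt.le).sum_add_card_support_le_card_subsums hw hw0
  have := single_le_sum (f := z) (by simp) (mem_univ i)
  rw [sum_tsub_single (by omega), card_support_tsub_single hi] at ih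
  have := card_subsums_lt hz hlt
  omega
termination_by ∑ i, z i
decreasing_by
  rw [sum_tsub_single (by omega)]
  have := single_le_sum (f := z) (by simp) (mem_univ i)
  omega

variable {x : ι → ℕ}

theorem two_mul_card_support_le_card (hG : 4 ≤ Fintype.card G) (hw : Injective w)
    (hw0 : ∀ i, w i ≠ 0)
    (hmin : ∀ y ≤ x, Fintype.linearCombination ℕ w y = 0 → y ≠ 0 → y = x) :
    2 * #{i | x i ≠ 0} ≤ Fintype.card G := by
  by_cases hpair : ∃ i j, x i ≠ 0 ∧ x j ≠ 0 ∧ i ≠ j ∧ w i + w j = 0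
  · obtain ⟨i, j, hi, hj, hij, hsum⟩ := hpair
    have hy0 : Pi.single i 1 + Pi.single j 1 ≠ (0 : ι → ℕ) := fun h => by
      simpa using congrFun h i
    rw [← hmin _ (single_add_single_le hij hi hj) (by simpa using hsum) hy0,
      card_support_single_add_single hij]
    omega
  push Not at hpair
  set A := ({i | x i ≠ 0} : Finset ι).image w
  set B := ({i | x i ≠ 0} : Finset ι).image (-w ·)
  have hA : #A = #{i | x i ≠ 0} := card_image_of_injective _ hw
  have hB : #B = #{i | x i ≠ 0} := card_image_of_injective _ (neg_injective.comp hw)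
  have hunion : #(A ∪ B) ≤ Fintype.card G - 1 := by
    rw [← card_univ, ← card_erase_of_mem (mem_univ 0)]
    refine card_le_card fun u hu => ?_
    simp only [A, B, mem_union, mem_image] at hu
    rcases hu with ⟨i, -, rfl⟩ | ⟨i, -, rfl⟩ <;> simp [hw0]
  have hinter : #(A ∩ B) ≤ 1 := by
    have hsub : A ∩ B ⊆ ({g : G | 2 • g = 0} : Finset G).erase 0 := by
      intro u hu
      obtain ⟨⟨i, hi, rfl⟩, ⟨j, hj, hji⟩⟩ := And.imp mem_image.mp mem_image.mp (mem_inter.mp hu)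
      rw [mem_filter] at hi hj
      obtain rfl : j = i :=
        by_contra fun hji' => hpair j i hj.2 hi.2 hji' (by rw [← hji, add_neg_cancel])
      refine mem_erase.mpr ⟨hw0 j, mem_filter.mpr ⟨mem_univ _, ?_⟩⟩
      nth_rewrite 1 [two_nsmul, ← hji]
      exact neg_add_cancel _
    have := card_le_card hsub
    rw [card_erase_of_mem (by simp)] at this
    have := card_two_nsmul_eq_le (0 : G)
    omega
  have := card_union_add_card_inter A B
  omega

theorem sum_add_card_support_le_card (hG : 4 ≤ Fintype.card G) (hw : Injective w)
    (hw0 : ∀ i, w i ≠ 0)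
    (hmin : ∀ y ≤ x, Fintype.linearCombination ℕ w y = 0 → y ≠ 0 → y = x) :
    ∑ i, x i + #{i | x i ≠ 0} ≤ Fintype.card G + 1 := by
  have hwidth := two_mul_card_support_le_card hG hw hw0 hmin
  by_cases h1 : ∀ i, x i ≤ 1
  · rw [sum_eq_card_support_of_le_one h1]
    omega
  push Not at h1
  obtain ⟨i, hi⟩ := h1
  have hlt := tsub_single_lt (i := i) (z := x) (by omega)
  have hfree : ZeroSumFree w (x - Pi.single i 1) := fun y hy h0 => by
    by_contra hy0
    exact (hy.trans_lt hlt).ne (hmin y (hy.trans hlt.le) h0 hy0)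
  have := hfree.sum_add_card_support_le_card_subsums hw hw0
  rw [sum_tsub_single (by omega), card_support_tsub_single hi] at this
  have := card_le_univ (subsums w (x - Pi.single i 1))
  omega

end Cyclic

lemma linearCombination_natCast {ι : Type*} [Fintype ι] {m : ℕ} (a y : ι → ℕ) :
    Fintype.linearCombination ℕ (fun i => (a i : ZMod m)) y = ((∑ i, a i * y i : ℕ) : ZMod m) := by
  simp [Fintype.linearCombination_apply, nsmul_eq_mul, mul_comm]

theorem stmt_7_general (m : ℕ) (hm : 4 ≤ m) (x : Fin (m - 1) → ℕ)
    (hmin : ∀ y : Fin (m - 1) → ℕ,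
      (∑ i : Fin (m - 1), ((i : ℕ) + 1) * y i) % m = 0 → y ≠ 0 → y ≤ x → y = x) :
    2 * (Finset.univ.filter (fun i => x i ≠ 0)).card ≤ m ∧
    (∑ i, x i) + (Finset.univ.filter (fun i => x i ≠ 0)).card ≤ m + 1 := by
  have : NeZero m := ⟨by omega⟩
  set w : Fin (m - 1) → ZMod m := fun i => ((i + 1 : ℕ) : ZMod m)
  have hlt (i : Fin (m - 1)) : (i : ℕ) + 1 < m := by omega
  have hw : Injective w := fun i j h => by
    have := (ZMod.natCast_eq_natCast_iff' _ _ _).mp h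
    rw [Nat.mod_eq_of_lt (hlt i), Nat.mod_eq_of_lt (hlt j)] at this
    exact Fin.ext (by omega)
  have hw0 (i : Fin (m - 1)) : w i ≠ 0 := fun h =>
    (Nat.le_of_dvd (by omega) ((ZMod.natCast_eq_zero_iff _ _).mp h)).not_gt (hlt i)
  have hmin' : ∀ y ≤ x, Fintype.linearCombination ℕ w y = 0 → y ≠ 0 → y = x := fun y hy h0 hy0 =>
    hmin y (Nat.mod_eq_zero_of_dvd ((ZMod.natCast_eq_zero_iff _ _).mp
      (by rwa [linearCombination_natCast (fun i : Fin (m - 1) => (i : ℕ) + 1)] at h0))) hy0 hy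
  have hG : 4 ≤ Fintype.card (ZMod m) := (ZMod.card m).symm ▸ hm
  have hwidth := two_mul_card_support_le_card hG hw hw0 hmin'
  have hsize := sum_add_card_support_le_card hG hw hw0 hmin'
  rw [ZMod.card] at hwidth hsize
  exact ⟨hwidth, hsize⟩

/-- For `m ≥ 4` and an indecomposable solution `x` of the standard congruence `(C_m)`:
the width satisfies `σ(x) ≤ m/2` and the total size `‖x‖₁ + σ(x) ≤ m + 1`. -/
theorem stmt_7 (m : ℕ) (hm : 4 ≤ m) (x : Fin (m - 1) → ℕ)
    (hx : (∑ i : Fin (m - 1), ((i : ℕ) + 1) * x i) % m = 0) (hx0 : x ≠ 0)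
    (hmin : ∀ y : Fin (m - 1) → ℕ,
      (∑ i : Fin (m - 1), ((i : ℕ) + 1) * y i) % m = 0 → y ≠ 0 → y ≤ x → y = x) :
    2 * (Finset.univ.filter (fun i => x i ≠ 0)).card ≤ m ∧
    (∑ i, x i) + (Finset.univ.filter (fun i => x i ≠ 0)).card ≤ m + 1 :=
  stmt_7_general m hm x hmin
end

section
/- Let m ≥ 2 and let i ∈ {1,…,m−1} with gcd(i, m) = 1. Then x = m·eᵢ is an extremal solution of the standard congruence (C_m): it is indecomposable with ‖x‖₁ + σ(x) = m + 1, and every extremal solution of width 1 has this form. Hence there are exactly φ(m) extremal solutions of width 1. -/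
/-- `x` is a solution of the standard congruence `(C_m)`. -/
def IsSol (m : ℕ) (x : Fin (m - 1) → ℕ) : Prop :=
  (∑ i : Fin (m - 1), ((i : ℕ) + 1) * x i) % m = 0

/-- `x` is an indecomposable solution of `(C_m)`. -/
def IsIndec (m : ℕ) (x : Fin (m - 1) → ℕ) : Prop :=
  IsSol m x ∧ x ≠ 0 ∧ ∀ y : Fin (m - 1) → ℕ, IsSol m y → y ≠ 0 → y ≤ x → y = x

/-- The width of `x`: the number of nonzero coordinates. -/
def width {m : ℕ} (x : Fin (m - 1) → ℕ) : ℕ :=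
  (Finset.univ.filter (fun i => x i ≠ 0)).card

/-- `x` is extremal: indecomposable with total size `m + 1`. -/
def IsExtremal (m : ℕ) (x : Fin (m - 1) → ℕ) : Prop :=
  IsIndec m x ∧ (∑ i, x i) + width x = m + 1

/-!
A vector of width 1 is `s • eᵢ`, and it solves `(C_m)` exactly when the additive order
`d = m / gcd(i + 1, m)` of `i + 1` in `ZMod m` divides `s`. Everything below `s • eᵢ` is again a
multiple of `eᵢ`, so `s • eᵢ` is indecomposable exactly when `s = d`. For width 1 the size
condition reads `s = m`, hence the extremal solutions of width 1 are the `m • eᵢ` with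
`gcd(i + 1, m) = 1`.
-/

open Finset

theorem ZMod.addOrderOf_natCast_eq_self_iff {m : ℕ} (a : ℕ) (hm : m ≠ 0) :
    addOrderOf (a : ZMod m) = m ↔ a.Coprime m := by
  rw [ZMod.addOrderOf_coe a hm, Nat.div_eq_self, or_iff_right hm, Nat.coprime_comm]

section Single

variable {m : ℕ}

lemma eq_single_of_le_single {ι : Type*} [DecidableEq ι] {y : ι → ℕ} {i : ι} {t : ℕ}
    (h : y ≤ Pi.single i t) : y = Pi.single i (y i) := by
  funext j
  by_cases hj : j = i
  · subst hj; simp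
  · simpa [hj] using h j

lemma width_single (i : Fin (m - 1)) {t : ℕ} (ht : t ≠ 0) : width (Pi.single i t) = 1 := by
  simp [width, Pi.single_apply, ht, filter_eq']

lemma eq_single_of_width_eq_one {x : Fin (m - 1) → ℕ} (hx : width x = 1) :
    ∃ i, x = Pi.single i (x i) := by
  obtain ⟨i, hi⟩ := card_eq_one.1 hx
  refine ⟨i, funext fun j => ?_⟩
  by_cases hj : j = i
  · subst hj; simp
  · have : j ∉ ({i} : Finset _) := by simpa using hj
    rw [← hi] at this
    simpa [hj] using this

lemma isSol_single_iff (i : Fin (m - 1)) (t : ℕ) :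
    IsSol m (Pi.single i t) ↔ addOrderOf ((i + 1 : ℕ) : ZMod m) ∣ t := by
  rw [IsSol, addOrderOf_dvd_iff_nsmul_eq_zero, nsmul_eq_mul, ← Nat.cast_mul,
    ZMod.natCast_eq_zero_iff, Nat.dvd_iff_mod_eq_zero, mul_comm]
  simp [Pi.single_apply]

lemma isIndec_single_iff (i : Fin (m - 1)) (t : ℕ) :
    IsIndec m (Pi.single i t) ↔ t = addOrderOf ((i + 1 : ℕ) : ZMod m) := by
  have : NeZero m := ⟨by have := i.2; omega⟩
  have hd := addOrderOf_pos ((i + 1 : ℕ) : ZMod m)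
  simp only [IsIndec, isSol_single_iff, ne_eq, Pi.single_eq_zero_iff]
  constructor
  · rintro ⟨hdt, ht, hmin⟩
    refine ((Pi.single_inj i).1 <| hmin _ ((isSol_single_iff i _).2 dvd_rfl) ?_ ?_).symm
    · simpa using hd.ne'
    · exact Pi.single_le_single.2 (Nat.le_of_dvd (Nat.pos_of_ne_zero ht) hdt)
  · rintro rfl
    refine ⟨dvd_rfl, hd.ne', fun y hy hy0 hle => ?_⟩
    rw [eq_single_of_le_single hle, isSol_single_iff] at hy
    rw [eq_single_of_le_single hle, Pi.single_eq_zero_iff] at hy0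
    rw [eq_single_of_le_single hle, Pi.single_inj]
    exact le_antisymm (by simpa using hle i) (Nat.le_of_dvd (Nat.pos_of_ne_zero hy0) hy)

lemma isExtremal_single_iff (i : Fin (m - 1)) (t : ℕ) :
    IsExtremal m (Pi.single i t) ↔ t = m ∧ ((i : ℕ) + 1).Coprime m := by
  have hm : m ≠ 0 := by have := i.2; omega
  have : NeZero m := ⟨hm⟩
  rw [IsExtremal, isIndec_single_iff, ← ZMod.addOrderOf_natCast_eq_self_iff _ hm]
  constructor
  · rintro ⟨rfl, hsize⟩
    rw [sum_pi_single', if_pos (mem_univ _), width_single i (addOrderOf_pos _).ne'] at hsize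
    omega
  · rintro ⟨rfl, hord⟩
    rw [sum_pi_single', if_pos (mem_univ _), width_single i hm]
    exact ⟨hord.symm, rfl⟩

lemma isExtremal_and_width_eq_one_iff {x : Fin (m - 1) → ℕ} :
    IsExtremal m x ∧ width x = 1 ↔
      ∃ i : Fin (m - 1), ((i : ℕ) + 1).Coprime m ∧ x = Pi.single i m := by
  constructor
  · rintro ⟨hx, hw⟩
    obtain ⟨i, hxi⟩ := eq_single_of_width_eq_one hw
    rw [hxi, isExtremal_single_iff] at hx
    rw [hxi, hx.1]
    exact ⟨i, hx.2, rfl⟩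
  · rintro ⟨i, hcop, rfl⟩
    have hm : m ≠ 0 := by have := i.2; omega
    exact ⟨(isExtremal_single_iff i m).2 ⟨rfl, hcop⟩, width_single i hm⟩

end Single

lemma card_filter_coprime_succ_eq_totient {m : ℕ} (hm : m ≠ 1) :
    #{i : Fin (m - 1) | ((i : ℕ) + 1).Coprime m} = m.totient := by
  rw [Nat.totient_eq_card_coprime]
  refine card_bij (fun i _ => (i : ℕ) + 1) (fun i hi => ?_) (fun i _ j _ h => Fin.ext (by omega))
    fun k hk => ?_
  · simp only [mem_filter, mem_univ, true_and] at hi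
    simp only [mem_filter, mem_range]
    exact ⟨by omega, hi.symm⟩
  · simp only [mem_filter, mem_range] at hk
    have hk0 : k ≠ 0 := by rintro rfl; exact hm ((Nat.coprime_zero_right m).1 hk.2)
    refine ⟨⟨k - 1, by omega⟩, ?_, by simp; omega⟩
    simpa [Nat.sub_add_cancel (Nat.one_le_iff_ne_zero.2 hk0)] using hk.2.symm

/-- For `i` with `gcd(i, m) = 1`, the vector `m·eᵢ` is an extremal solution of `(C_m)`
of width 1; every extremal solution of width 1 has this form; and there are exactly
`φ(m)` extremal solutions of width 1. -/
theorem stmt_9 (m : ℕ) (hm : 2 ≤ m) :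
    (∀ i : Fin (m - 1), Nat.Coprime ((i : ℕ) + 1) m →
      IsExtremal m (fun j => if j = i then m else 0)) ∧
    (∀ x : Fin (m - 1) → ℕ, IsExtremal m x → width x = 1 →
      ∃ i : Fin (m - 1), Nat.Coprime ((i : ℕ) + 1) m ∧
        x = fun j => if j = i then m else 0) ∧
    {x : Fin (m - 1) → ℕ | IsExtremal m x ∧ width x = 1}.ncard = Nat.totient m := by
  have hsingle (i : Fin (m - 1)) : (fun j => if j = i then m else 0) = Pi.single i m :=
    funext fun j => (Pi.single_apply i m j).symm
  simp only [hsingle]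
  refine ⟨fun i hcop => (isExtremal_single_iff i m).2 ⟨rfl, hcop⟩,
    fun x hx hw => isExtremal_and_width_eq_one_iff.1 ⟨hx, hw⟩, ?_⟩
  have hset : {x | IsExtremal m x ∧ width x = 1} =
      (Pi.single · m) '' {i : Fin (m - 1) | ((i : ℕ) + 1).Coprime m} := by
    ext x
    simp [isExtremal_and_width_eq_one_iff, eq_comm]
  have hinj : Function.Injective (Pi.single · m : Fin (m - 1) → Fin (m - 1) → ℕ) :=
    fun i j h => by simpa [Pi.single_apply, show m ≠ 0 by omega] using congrFun h i
  rw [hset, Set.ncard_image_of_injective _ hinj, Set.ncard_eq_toFinset_card', Set.toFinset_ofPred,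
    card_filter_coprime_succ_eq_totient (by omega)]
end

section
/- For even m ≥ 6 and 1 ≤ a < m/2 with a ≠ m/4, the set T(m,a) = {a, m/2, m/2 + a} is an admissible subset of {1,…,m−1} with exactly 6 distinct residue classes of subset sums mod m, i.e., Δ_m(T(m,a)) = 6. -/
/-- A finite set `T ⊆ {1,…,m−1}` is admissible if no nonempty subset has sum divisible
by `m`. -/
def Admissible (m : ℕ) (T : Finset ℕ) : Prop :=
  T ⊆ Finset.Icc 1 (m - 1) ∧ ∀ U ⊆ T, U.Nonempty → ¬ m ∣ U.sum id

/-- The diversity: the number of residue classes mod `m` represented by subset sums. -/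
def diversity (m : ℕ) (T : Finset ℕ) : ℕ :=
  (T.powerset.image (fun U => U.sum id % m)).card

/-! With `m = 2b` the set is `{a, b, b + a}`. Its subset sums `0, a, b, a + b, 2a + b, a + 2b,
2a + 2b` all lie below `4b`, so their residues mod `2b` are read off by subtracting `2b` at most
once: `0, a, b, a + b, 2a + b or 2a - b, a, 2a`. As `0 < a < b` and `2a ≠ b`, only the empty sum
is `0` mod `2b`, and the six classes `0, a, 2a, b, a + b, 2a ± b` are pairwise distinct. -/

namespace Finset
variable {α : Type*} [DecidableEq α]

theorem powerset_triple (x y z : α) :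
    ({x, y, z} : Finset α).powerset = {∅, {x}, {y}, {z}, {x, y}, {x, z}, {y, z}, {x, y, z}} := by
  ext U
  simp only [powerset_insert, mem_union, mem_image, mem_powerset, subset_singleton_iff,
    mem_insert, mem_singleton]
  aesop

end Finset

theorem Nat.mod_eq_sub_of_le_of_lt_two_mul {m n : ℕ} (h₁ : m ≤ n) (h₂ : n < 2 * m) :
    n % m = n - m := by
  rw [Nat.mod_eq_sub_mod h₁, Nat.mod_eq_of_lt (by omega)]

section
open Finset
variable {a b : ℕ}

theorem admissible_triple (ha : 0 < a) (hab : a < b) (h2 : 2 * a ≠ b) :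
    Admissible (2 * b) {a, b, b + a} := by
  refine ⟨fun x hx => ?_, fun U hU hne hdvd => ?_⟩
  · simp only [mem_insert, mem_singleton, mem_Icc] at hx ⊢
    omega
  have ha_notMem : a ∉ ({b, b + a} : Finset ℕ) := by simp; omega
  rw [← mem_powerset, powerset_triple] at hU
  simp only [mem_insert, mem_singleton] at hU
  rw [Nat.dvd_iff_mod_eq_zero] at hdvd
  rcases hU with rfl | rfl | rfl | rfl | rfl | rfl | rfl | rfl
  · exact hne.ne_empty rfl
  all_goals
    rcases lt_or_gt_of_ne h2 with h | h <;>
    simp (disch := omega) only [sum_insert ha_notMem, sum_pair, sum_singleton, id,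
      Nat.mod_eq_of_lt, Nat.mod_eq_sub_of_le_of_lt_two_mul] at hdvd <;>
    omega

theorem diversity_triple (ha : 0 < a) (hab : a < b) (h2 : 2 * a ≠ b) :
    diversity (2 * b) {a, b, b + a} = 6 := by
  have ha_notMem : a ∉ ({b, b + a} : Finset ℕ) := by simp; omega
  rw [diversity, powerset_triple]
  rcases lt_or_gt_of_ne h2 with h | h <;>
  simp (disch := omega) only [image_insert, image_singleton, sum_empty, sum_insert ha_notMem,
    sum_pair, sum_singleton, id, Nat.mod_eq_of_lt, Nat.mod_eq_sub_of_le_of_lt_two_mul] <;>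
  simp (disch := simp only [mem_insert, mem_singleton]; omega) only
    [card_insert_of_notMem, card_insert_of_mem, card_singleton]

end

theorem stmt_16_general (m a : ℕ) (heven : 2 ∣ m)
    (ha1 : 1 ≤ a) (ha2 : a < m / 2) (ha4 : 4 * a ≠ m) :
    Admissible m {a, m / 2, m / 2 + a} ∧ diversity m {a, m / 2, m / 2 + a} = 6 := by
  obtain ⟨b, rfl⟩ := heven
  rw [Nat.mul_div_cancel_left b two_pos] at ha2 ⊢
  exact ⟨admissible_triple ha1 ha2 (by omega), diversity_triple ha1 ha2 (by omega)⟩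

/-- For even `m ≥ 6` and `1 ≤ a < m/2` with `a ≠ m/4`, the set `{a, m/2, m/2 + a}` is
admissible with diversity exactly 6. -/
theorem stmt_16 (m a : ℕ) (hm : 6 ≤ m) (heven : 2 ∣ m)
    (ha1 : 1 ≤ a) (ha2 : a < m / 2) (ha4 : 4 * a ≠ m) :
    Admissible m {a, m / 2, m / 2 + a} ∧ diversity m {a, m / 2, m / 2 + a} = 6 :=
  stmt_16_general m a heven ha1 ha2 ha4
end
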